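/- arXiv:2003.01603 — 3 statements merged into one kernel-verified Lean document; each statement's English description precedes it below -/
import Mathlib

section
/- Overspill for positive formulas in ℕ*: if A(x) is a formula built from equalities of polynomial terms using only conjunction, disjunction, and existential quantification (a positive existential formula), and A(a) holds in ℕ* for infinitely many standard natural numbers a, then A(∞) holds in ℕ*. -/
/-- Terms in the language {0, S, +, ·} with variables from `Fin n`. -/
inductive PTerm : ℕ → Type
  | var : ∀ {n}, Fin n → PTerm n
  | zero : ∀ {n}, PTerm n
  | succ : ∀ {n}, PTerm n → PTerm n
  | add : ∀ {n}, PTerm n → PTerm n → PTerm n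
  | mul : ∀ {n}, PTerm n → PTerm n → PTerm n

/-- Evaluation of a term in a structure with 0, 1 (for successor `x + 1`), + and ·. -/
def PTerm.eval {α : Type*} [Zero α] [One α] [Add α] [Mul α] :
    ∀ {n}, PTerm n → (Fin n → α) → α
  | _, .var i, v => v i
  | _, .zero, _ => 0
  | _, .succ t, v => t.eval v + 1
  | _, .add s t, v => s.eval v + t.eval v
  | _, .mul s t, v => s.eval v * t.eval v

/-- Positive existential formulas: built from equalities of terms by ∧, ∨, ∃. -/
inductive PForm : ℕ → Type
  | eq : ∀ {n}, PTerm n → PTerm n → PForm n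
  | and : ∀ {n}, PForm n → PForm n → PForm n
  | or : ∀ {n}, PForm n → PForm n → PForm n
  | ex : ∀ {n}, PForm (n + 1) → PForm n

/-- Classical satisfaction of a positive existential formula in a structure. -/
def PForm.Holds {α : Type*} [Zero α] [One α] [Add α] [Mul α] :
    ∀ {n}, PForm n → (Fin n → α) → Prop
  | _, .eq s t, v => s.eval v = t.eval v
  | _, .and φ ψ, v => φ.Holds v ∧ ψ.Holds v
  | _, .or φ ψ, v => φ.Holds v ∨ ψ.Holds v
  | _, .ex φ, v => ∃ a : α, φ.Holds (Fin.cons a v)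

open Filter Topology

lemma PTerm.continuous_eval {n : ℕ} (t : PTerm n) :
    Continuous (fun v : Fin n → ℕ∞ => t.eval v) := by
  induction t with
  | var i => simp only [PTerm.eval]; exact continuous_apply i
  | zero => simp only [PTerm.eval]; exact continuous_const
  | succ t ih => simp only [PTerm.eval]; exact ih.add continuous_const
  | add s t ihs iht => simp only [PTerm.eval]; exact ihs.add iht
  | mul s t ihs iht => simp only [PTerm.eval]; exact ihs.mul iht

lemma PForm.holds_limit : ∀ {n : ℕ} (φ : PForm n) (U : Ultrafilter ℕ)
    (v : ℕ → Fin n → ℕ∞) (L : Fin n → ℕ∞),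
    (∀ i, Tendsto (fun k => v k i) (U : Filter ℕ) (𝓝 (L i))) →
    (∀ᶠ k in (U : Filter ℕ), φ.Holds (v k)) → φ.Holds L := by
  intro n φ
  induction φ with
  | eq s t =>
    intro U v L hv hh
    have hvt : Tendsto v (U : Filter ℕ) (𝓝 L) := tendsto_pi_nhds.mpr hv
    have hs : Tendsto (fun k => s.eval (v k)) (U : Filter ℕ) (𝓝 (s.eval L)) :=
      (s.continuous_eval.tendsto L).comp hvt
    have ht : Tendsto (fun k => t.eval (v k)) (U : Filter ℕ) (𝓝 (t.eval L)) :=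
      (t.continuous_eval.tendsto L).comp hvt
    exact tendsto_nhds_unique (hs.congr' (hh.mono fun k hk => hk)) ht
  | and φ ψ ihφ ihψ =>
    intro U v L hv hh
    exact ⟨ihφ U v L hv (hh.mono fun k hk => hk.1),
           ihψ U v L hv (hh.mono fun k hk => hk.2)⟩
  | or φ ψ ihφ ihψ =>
    intro U v L hv hh
    rcases (Ultrafilter.eventually_or).mp hh with h | h
    · exact Or.inl (ihφ U v L hv h)
    · exact Or.inr (ihψ U v L hv h)
  | ex φ ih =>
    intro U v L hv hh
    classical
    let b : ℕ → ℕ∞ := fun k =>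
      if hk : ∃ a : ℕ∞, φ.Holds (Fin.cons a (v k)) then hk.choose else 0
    obtain ⟨x, hx⟩ : ∃ x : ℕ∞, (U.map b : Filter ℕ∞) ≤ 𝓝 x := by
      rcases isCompact_univ.ultrafilter_le_nhds (U.map b)
          (by simp [Filter.le_principal_iff]) with ⟨x, _, hx⟩
      exact ⟨x, hx⟩
    refine ⟨x, ih U (fun k => Fin.cons (b k) (v k)) (Fin.cons x L) ?_ ?_⟩
    · intro i
      refine Fin.cases ?_ ?_ i
      · simpa [Filter.Tendsto] using hx
      · intro j; simpa using hv j
    · refine hh.mono fun k hk => ?_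
      have hk' : ∃ a : ℕ∞, φ.Holds (Fin.cons a (v k)) := hk
      show φ.Holds (Fin.cons (b k) (v k))
      have hb : b k = hk'.choose := dif_pos hk'
      rw [hb]; exact hk'.choose_spec

/-- Overspill for positive formulas in ℕ* = ℕ∞: if a positive existential formula
in one free variable holds at infinitely many standard naturals, it holds at ∞. -/
theorem stmt_5 (A : PForm 1)
    (h : {a : ℕ | A.Holds (α := ℕ∞) (fun _ => (a : ℕ∞))}.Infinite) :
    A.Holds (α := ℕ∞) (fun _ => (⊤ : ℕ∞)) := by
  set S : Set ℕ := {a : ℕ | A.Holds (α := ℕ∞) (fun _ => (a : ℕ∞))} with hS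
  have hfreq : ∃ᶠ a in (cofinite : Filter ℕ), a ∈ S :=
    Set.infinite_iff_frequently_cofinite.mp h
  have hne : NeBot ((cofinite : Filter ℕ) ⊓ 𝓟 S) := frequently_iff_neBot.mp hfreq
  haveI := hne
  let U : Ultrafilter ℕ := Ultrafilter.of ((cofinite : Filter ℕ) ⊓ 𝓟 S)
  have hU : (U : Filter ℕ) ≤ (cofinite : Filter ℕ) ⊓ 𝓟 S := Ultrafilter.of_le _
  have hUcof : (U : Filter ℕ) ≤ atTop := by
    rw [← Nat.cofinite_eq_atTop]; exact hU.trans inf_le_left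
  have hmem : ∀ᶠ a : ℕ in (U : Filter ℕ), A.Holds (α := ℕ∞) (fun _ => (a : ℕ∞)) :=
    (hU.trans inf_le_right) (mem_principal_self _)
  have htop : Tendsto (fun a : ℕ => (a : ℕ∞)) atTop (𝓝 (⊤ : ℕ∞)) := by
    rw [ENat.tendsto_nhds_top_iff_natCast_lt]
    intro m
    filter_upwards [eventually_gt_atTop m] with a ha
    exact_mod_cast ha
  exact A.holds_limit U (fun a => fun _ => (a : ℕ∞)) (fun _ => ⊤)
    (fun _ => (htop.mono_left hUcof)) hmem
end

section
/- In any commutative semiring satisfying the ℕ*-laws (in particular in ℕ* = ℕ ∪ {∞}), a multivariate polynomial with coefficients in ℕ* either takes a constant value in ℕ on all inputs from ℕ, or takes the value ∞ at the all-∞ tuple. -/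
/-!
Every monomial of positive degree with a nonzero coefficient evaluates to `⊤` at the all-`⊤`
tuple, since `⊤ ^ e = ⊤` for `e ≠ 0` and `a * ⊤ = ⊤` for `a ≠ 0`; and since `ℕ∞` is canonically
ordered, a sum with a summand `⊤` is `⊤`. So unless the polynomial has total degree `0`, i.e. is a
constant `C a`, its value at the all-`⊤` tuple is `⊤`; and a constant `a` is either `⊤` or in `ℕ`.
-/

namespace MvPolynomial

variable {σ : Type*}

theorem eval_top_monomial_of_ne_zero {m : σ →₀ ℕ} {a : ℕ∞} (hm : m ≠ 0) (ha : a ≠ 0) :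
    eval (fun _ => (⊤ : ℕ∞)) (monomial m a) = ⊤ := by
  have hprod : (m.prod fun _ e => (⊤ : ℕ∞) ^ e) = ⊤ := by
    have hcard : m.support.card ≠ 0 := Finset.card_ne_zero.mpr (Finsupp.support_nonempty_iff.mpr hm)
    rw [Finsupp.prod,
      Finset.prod_congr rfl fun i hi => ENat.top_pow (Finsupp.mem_support_iff.mp hi),
      Finset.prod_const, ENat.top_pow hcard]
  rw [eval_monomial, hprod]
  exact WithTop.mul_top ha

theorem eval_top_of_totalDegree_ne_zero {p : MvPolynomial σ ℕ∞} (hp : p.totalDegree ≠ 0) :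
    eval (fun _ => (⊤ : ℕ∞)) p = ⊤ := by
  obtain ⟨m, hm, i, hmi⟩ : ∃ m ∈ p.support, ∃ i, m i ≠ 0 := by
    simpa [totalDegree_eq_zero_iff] using hp
  have hm0 : m ≠ 0 := fun h => hmi (by simp [h])
  refine top_le_iff.mp ?_
  calc ⊤ = eval (fun _ => ⊤) (monomial m (p.coeff m)) :=
        (eval_top_monomial_of_ne_zero hm0 (mem_support_iff.mp hm)).symm
    _ ≤ ∑ n ∈ p.support, eval (fun _ => ⊤) (monomial n (p.coeff n)) :=
        Finset.single_le_sum (f := fun n => eval (fun _ => ⊤) (monomial n (p.coeff n)))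
          (fun _ _ => zero_le) hm
    _ = eval (fun _ => ⊤) p := by rw [← map_sum, ← p.as_sum]

end MvPolynomial

open MvPolynomial in
/-- A multivariate polynomial with coefficients in ℕ* = ℕ∞ either takes a
constant value in ℕ on all inputs from ℕ, or takes the value ∞ at the
all-∞ tuple. -/
theorem stmt_16 (k : ℕ) (p : MvPolynomial (Fin k) ℕ∞) :
    (∃ c : ℕ, ∀ v : Fin k → ℕ,
      MvPolynomial.eval (fun i => (v i : ℕ∞)) p = (c : ℕ∞)) ∨
    MvPolynomial.eval (fun _ : Fin k => (⊤ : ℕ∞)) p = ⊤ := by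
  by_cases hdeg : p.totalDegree = 0
  · rw [totalDegree_eq_zero_iff_eq_C] at hdeg
    cases h : p.coeff 0 using ENat.recTopCoe with
    | top => exact Or.inr (by rw [hdeg, eval_C, h])
    | coe c => exact Or.inl ⟨c, fun v => by rw [hdeg, eval_C, h]⟩
  · exact Or.inr (eval_top_of_totalDegree_ne_zero hdeg)
end

section
/- The Even predicate cannot be decided by a single-valued positive existential relation stable under ℕ*: if B(x,y) is a positive existential formula with ℕ ⊨ B(a, Even(a)) for all a ∈ ℕ (where Even(a) ∈ {0,1} is 1 iff a is even) and the uniqueness B(x,u) ∧ B(x,v) → u = v holds in ℕ*, then a contradiction follows, since both {a : Even(a) = 1} and its complement are infinite, so by overspill ℕ* ⊨ B(∞,0) and ℕ* ⊨ B(∞,1). -/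
/-!
Positive existential formulas are preserved along the embedding `ℕ → ℕ∞`, and they define
closed sets in the compact Hausdorff space `ℕ∞`: terms are continuous (`⊤ * 0 = 0` keeps
multiplication continuous), `∧`/`∨` are intersection/union, and `∃` is a projection along the
compact factor `ℕ∞`. Since `⊤` is the limit of any unbounded sequence of naturals, a formula
satisfied at infinitely many naturals is satisfied at `⊤` (overspill). Both the even and the odd
numbers are unbounded, so `B(⊤, 1)` and `B(⊤, 0)` hold, against uniqueness.
-/

open Filter Topology

theorem PTerm.eval_map {α β : Type*} [Semiring α] [Semiring β] (f : α →+* β) :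
    ∀ {n} (t : PTerm n) (v : Fin n → α), t.eval (f ∘ v) = f (t.eval v)
  | _, .var _, _ => by simp [PTerm.eval]
  | _, .zero, _ => by simp [PTerm.eval]
  | _, .succ t, v => by simp [PTerm.eval, t.eval_map f v]
  | _, .add s t, v => by simp [PTerm.eval, s.eval_map f v, t.eval_map f v]
  | _, .mul s t, v => by simp [PTerm.eval, s.eval_map f v, t.eval_map f v]

theorem PForm.Holds.map {α β : Type*} [Semiring α] [Semiring β] (f : α →+* β) :
    ∀ {n} {φ : PForm n} {v : Fin n → α}, φ.Holds v → φ.Holds (f ∘ v)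
  | _, .eq s t, v, h => by
      simp only [PForm.Holds, PTerm.eval_map] at h ⊢
      rw [h]
  | _, .and _ _, _, h => ⟨h.1.map f, h.2.map f⟩
  | _, .or _ _, _, h => h.imp (·.map f) (·.map f)
  | _, .ex _, v, h => by
      obtain ⟨a, ha⟩ := h
      exact ⟨f a, by simpa only [Fin.comp_cons] using ha.map f⟩

section Topology

variable {α : Type*} [Zero α] [One α] [Add α] [Mul α] [TopologicalSpace α]
  [ContinuousAdd α] [ContinuousMul α]

theorem PTerm.continuous_eval_s18 : ∀ {n} (t : PTerm n), Continuous (t.eval (α := α))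
  | _, .var i => (continuous_apply i).congr fun _ => by simp [PTerm.eval]
  | _, .zero => (continuous_const (y := (0 : α))).congr fun _ => by simp [PTerm.eval]
  | _, .succ t =>
      (t.continuous_eval_s18.add (continuous_const (y := (1 : α)))).congr fun _ => by simp [PTerm.eval]
  | _, .add s t => (s.continuous_eval_s18.add t.continuous_eval_s18).congr fun _ => by simp [PTerm.eval]
  | _, .mul s t => (s.continuous_eval_s18.mul t.continuous_eval_s18).congr fun _ => by simp [PTerm.eval]

theorem PForm.isClosed_setOf_holds [T2Space α] [CompactSpace α] :
    ∀ {n} (φ : PForm n), IsClosed {v : Fin n → α | φ.Holds v}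
  | _, .eq s t => isClosed_eq s.continuous_eval_s18 t.continuous_eval_s18
  | _, .and φ ψ => φ.isClosed_setOf_holds.inter ψ.isClosed_setOf_holds
  | _, .or φ ψ => φ.isClosed_setOf_holds.union ψ.isClosed_setOf_holds
  | n, .ex φ => by
      have hcons :
          Continuous fun p : α × (Fin n → α) => (Fin.cons p.1 p.2 : Fin (n + 1) → α) :=
        continuous_fst.finCons (A := fun _ => α) continuous_snd
      have hproj := isClosedMap_snd_of_compactSpace _ (φ.isClosed_setOf_holds.preimage hcons)
      convert hproj using 1
      ext v
      simp [PForm.Holds]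

end Topology

theorem PForm.holds_top_of_frequently {n : ℕ} (φ : PForm (n + 1)) (v : Fin n → ℕ)
    (h : ∃ᶠ a in atTop, φ.Holds (Fin.cons a v)) :
    φ.Holds (Fin.cons (⊤ : ℕ∞) (Nat.cast ∘ v)) := by
  have hcast : ∀ a : ℕ, φ.Holds (Fin.cons a v) →
      φ.Holds (Fin.cons (a : ℕ∞) (Nat.cast ∘ v)) := fun a ha => by
    have := ha.map (Nat.castRingHom ℕ∞)
    rwa [Fin.comp_cons] at this
  have hlim : Tendsto (fun a : ℕ => (Fin.cons (a : ℕ∞) (Nat.cast ∘ v) : Fin (n + 1) → ℕ∞)) atTop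
      (𝓝 (Fin.cons ⊤ (Nat.cast ∘ v))) :=
    ((continuous_id.finCons continuous_const).tendsto ⊤).comp ENat.tendsto_natCast_nhds_top
  exact φ.isClosed_setOf_holds.mem_of_frequently_of_tendsto (h.mono hcast) hlim

/-- The Even predicate cannot be decided by a single-valued positive existential
relation stable under ℕ*: if B(x,y) is positive existential, ℕ ⊨ B(a, Even(a))
for all a (with Even(a) ∈ {0,1}), and uniqueness `B(x,u) ∧ B(x,v) → u = v`
holds in ℕ* = ℕ∞, then a contradiction follows. -/
theorem stmt_18 (B : PForm 2)
    (hdef : ∀ a : ℕ, B.Holds (α := ℕ) ![a, if Even a then 1 else 0])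
    (huniq : ∀ x u v : ℕ∞, B.Holds ![x, u] → B.Holds ![x, v] → u = v) :
    False := by
  have hodd : ∃ᶠ a in atTop, B.Holds (α := ℕ) ![a, 0] :=
    frequently_atTop.2 fun a =>
      ⟨2 * a + 1, by omega, by simpa [parity_simps] using hdef (2 * a + 1)⟩
  have heven : ∃ᶠ a in atTop, B.Holds (α := ℕ) ![a, 1] :=
    frequently_atTop.2 fun a => ⟨2 * a, by omega, by simpa using hdef (2 * a)⟩
  have h0 := B.holds_top_of_frequently ![0] hodd
  have h1 := B.holds_top_of_frequently ![1] heven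
  have hcons : ∀ e : ℕ, Fin.cons ⊤ (Nat.cast ∘ ![e]) = ![(⊤ : ℕ∞), e] := fun e => by
    ext i; fin_cases i <;> rfl
  have := huniq ⊤ _ _ (hcons 0 ▸ h0) (hcons 1 ▸ h1)
  simp at this
end
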